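/- Let G be a totally disconnected Hausdorff locally compact group and φ a continuous endomorphism of G. Suppose there exists a local base ℬ at the identity consisting of compact open subgroups of G such that for every U ∈ ℬ and every n ≥ 1 the subgroup φ⁻ⁿ(U) is normal in G. Then h_top(φ|_{ker φ}) = 0 and h_top(φ) = h_top(φ̄), where φ̄ is the endomorphism induced by φ on the quotient G/ker φ. -/

import Mathlib

open MeasureTheory Filter Topology Pointwise
open scoped ENNReal NNReal Classical

/-- The `n`-th `φ`-cotrajectory of `U`: `U ∩ φ⁻¹(U) ∩ … ∩ φ⁻⁽ⁿ⁻¹⁾(U)`. -/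
def cotraj {G : Type*} (φ : G → G) (U : Set G) (n : ℕ) : Set G :=
  ⋂ k ∈ Finset.range n, (φ^[k]) ⁻¹' U

/-- Topological entropy of a (continuous) endomorphism of a locally compact Hausdorff
topological group, computed with respect to a left Haar measure:
`h_top(φ) = sup_U limsup_n (−log μ(C_n(φ,U)))/n`, the supremum over all compact
neighborhoods `U` of `1`. -/
noncomputable def mulHtop {G : Type*} [Group G] [TopologicalSpace G] (φ : G → G) : ℝ≥0∞ :=
  letI : MeasurableSpace G := borel G
  haveI : BorelSpace G := ⟨rfl⟩
  if h : IsTopologicalGroup G ∧ T2Space G ∧ LocallyCompactSpace G then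
    haveI := h.1
    haveI := h.2.1
    haveI := h.2.2
    ⨆ U ∈ {U : Set G | IsCompact U ∧ U ∈ 𝓝 (1 : G)},
      Filter.atTop.limsup fun n : ℕ =>
        ENNReal.ofReal
          ((-Real.log ((MeasureTheory.Measure.haar (cotraj φ U n)).toReal)) / n)
  else 0

/-- The restriction of an endomorphism to an invariant subgroup
(junk value `1` if the subgroup is not invariant). -/
noncomputable def mulSubHom {G : Type*} [Group G] (φ : G →* G) (H : Subgroup G) : H →* H :=
  if h : H ≤ H.comap φ then (φ.domRestrict H).codRestrict H (fun x => h x.2) else 1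

/-- The endomorphism induced on the quotient by an invariant normal subgroup
(junk value `1` if the subgroup is not invariant). -/
noncomputable def mulQuotHom {G : Type*} [Group G] (φ : G →* G) (H : Subgroup G) [H.Normal] :
    G ⧸ H →* G ⧸ H :=
  if h : H ≤ H.comap φ then QuotientGroup.map H H φ h else 1


/-!
Since `φ` kills `ker φ`, for a compact open subgroup `U` the cotrajectory `C_n(φ, U)` is an open
subgroup of `U` containing `U ∩ ker φ`, so the quotient map `π : G → G ⧸ ker φ` does not change its
index in `U`. Counting cosets, Haar measures of `C_n(φ, U)` and of `π C_n(φ, U)` therefore differ by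
the factor `μ U / ν (π U)`, independent of `n`. As `π C_n(φ, U)` lies between `C_n(φ̄, π U')` (for
`U' ⊆ U ∩ φ⁻¹ U`) and `C_n(φ̄, π U)`, the entropies of `φ` and `φ̄` agree along a basis of compact
open subgroups. On `ker φ` the restriction is trivial, so its cotrajectories are constant.
-/
section Cotraj

variable {X : Type*}

lemma mem_cotraj {ψ : X → X} {U : Set X} {n : ℕ} {x : X} :
    x ∈ cotraj ψ U n ↔ ∀ k < n, ψ^[k] x ∈ U := by
  simp [cotraj]

lemma cotraj_subset_of_ne_zero (ψ : X → X) (U : Set X) {n : ℕ} (hn : n ≠ 0) :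
    cotraj ψ U n ⊆ U := fun _ hx => mem_cotraj.1 hx 0 (Nat.pos_of_ne_zero hn)

lemma cotraj_mono (ψ : X → X) {U V : Set X} (h : U ⊆ V) (n : ℕ) :
    cotraj ψ U n ⊆ cotraj ψ V n := fun _ hx =>
  mem_cotraj.2 fun k hk => h (mem_cotraj.1 hx k hk)

lemma cotraj_mem_nhds [TopologicalSpace X] {ψ : X → X} (hψ : Continuous ψ) {x : X}
    (hx : ψ x = x) {U : Set X} (hU : U ∈ 𝓝 x) (n : ℕ) : cotraj ψ U n ∈ 𝓝 x :=
  (Filter.biInter_finset_mem _).2 fun k _ =>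
    (hψ.iterate k).continuousAt.preimage_mem_nhds (by rwa [Function.iterate_fixed hx])

lemma cotraj_const_of_ne_zero {x₀ : X} {U : Set X} (hx₀ : x₀ ∈ U) {n : ℕ} (hn : n ≠ 0) :
    cotraj (fun _ => x₀) U n = U := by
  refine (cotraj_subset_of_ne_zero _ _ hn).antisymm fun x hx => mem_cotraj.2 fun k _ => ?_
  rcases k with _ | k
  · exact hx
  · rwa [Function.iterate_succ_apply']

lemma Function.Semiconj.image_cotraj_subset {Y : Type*} {π : X → Y} {ψ : X → X} {ψ' : Y → Y}
    (h : Function.Semiconj π ψ ψ') (U : Set X) (n : ℕ) :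
    π '' cotraj ψ U n ⊆ cotraj ψ' (π '' U) n := by
  rintro _ ⟨x, hx, rfl⟩
  exact mem_cotraj.2 fun k hk => (h.iterate_right k x).symm ▸ ⟨_, mem_cotraj.1 hx k hk, rfl⟩

end Cotraj

lemma cotraj_image_subset_image_cotraj {G G' : Type*} [Group G] [Group G'] {π : G →* G'}
    {φ : G →* G} {φ' : G' → G'} (h : Function.Semiconj π φ φ') (hker : π.ker ≤ φ.ker)
    {U U' : Set G} (hU'U : U' ⊆ U) (hφU' : Set.MapsTo φ U' U) {n : ℕ} (hn : n ≠ 0) :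
    cotraj φ' (π '' U') n ⊆ π '' cotraj φ U n := by
  intro y hy
  obtain ⟨x, hxU', rfl⟩ := cotraj_subset_of_ne_zero _ _ hn hy
  refine ⟨x, mem_cotraj.2 fun k hk => ?_, rfl⟩
  rcases k with _ | i
  · exact hU'U hxU'
  · obtain ⟨u, huU', hu⟩ := (h.iterate_right i x).symm ▸ mem_cotraj.1 hy i (by omega)
    have hφ : φ u = φ (φ^[i] x) := (φ.eq_iff).2 (hker ((π.eq_iff).1 hu))
    rw [Function.iterate_succ_apply', ← hφ]
    exact hφU' huU'

def cotrajSubgroup {G : Type*} [Group G] (φ : G →* G) (U : Subgroup G) (n : ℕ) :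
    Subgroup G where
  carrier := cotraj φ U n
  one_mem' := mem_cotraj.2 fun k _ => by simp
  mul_mem' ha hb := mem_cotraj.2 fun k hk => by
    rw [iterate_map_mul]
    exact U.mul_mem (mem_cotraj.1 ha k hk) (mem_cotraj.1 hb k hk)
  inv_mem' ha := mem_cotraj.2 fun k hk => by
    rw [iterate_map_inv]
    exact U.inv_mem (mem_cotraj.1 ha k hk)

@[simp]
lemma coe_cotrajSubgroup {G : Type*} [Group G] (φ : G →* G) (U : Subgroup G) (n : ℕ) :
    (cotrajSubgroup φ U n : Set G) = cotraj φ U n := rfl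

lemma inf_ker_le_cotrajSubgroup {G : Type*} [Group G] (φ : G →* G) (U : Subgroup G) (n : ℕ) :
    U ⊓ φ.ker ≤ cotrajSubgroup φ U n := by
  rintro x ⟨hxU, hxK⟩
  refine mem_cotraj.2 fun k _ => ?_
  rcases k with _ | i
  · exact hxU
  · rw [Function.iterate_succ_apply, MonoidHom.mem_ker.1 hxK, iterate_map_one]
    exact U.one_mem

lemma Subgroup.relIndex_map_map_of_inf_ker_le {G G' : Type*} [Group G] [Group G']
    (f : G →* G') {C U : Subgroup G} (hCU : C ≤ U) (hUC : U ⊓ f.ker ≤ C) :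
    (C.map f).relIndex (U.map f) = C.relIndex U := by
  rw [← Subgroup.relIndex_comap, ← Subgroup.inf_relIndex_right]
  congr 1
  refine le_antisymm (fun x ⟨hxC, hxU⟩ => ?_) fun x hx => ⟨Subgroup.le_comap_map f C hx, hCU hx⟩
  obtain ⟨c, hc, hcx⟩ := Subgroup.mem_map.1 (Subgroup.mem_comap.1 hxC)
  have hck : c⁻¹ * x ∈ U ⊓ f.ker :=
    ⟨U.mul_mem (U.inv_mem (hCU hc)) hxU, (f.eq_iff).1 hcx.symm⟩
  simpa using C.mul_mem hc (hUC hck)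

section HaarCounting

variable {G : Type*} [Group G] [TopologicalSpace G] [IsTopologicalGroup G]
  [MeasurableSpace G] [BorelSpace G]

lemma measure_eq_relIndex_mul (μ : Measure G) [μ.IsMulLeftInvariant] {C U : Subgroup G}
    (hCU : C ≤ U) (hU : IsCompact (U : Set G)) (hC : IsOpen (C : Set G)) :
    μ U = C.relIndex U * μ C := by
  have hUopen : IsOpen (U : Set G) := Subgroup.isOpen_mono hCU hC
  have : CompactSpace U := isCompact_iff_compactSpace.1 hU
  have hemb : MeasurableEmbedding U.subtype := MeasurableEmbedding.subtype_coe hUopen.measurableSet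
  have : (μ.comap U.subtype).IsMulLeftInvariant := Measure.IsMulLeftInvariant.comap μ hemb
  have hCopen : IsOpen ((C.subgroupOf U : Subgroup U) : Set U) := hC.preimage continuous_subtype_val
  have : Finite (U ⧸ C.subgroupOf U) := Subgroup.quotient_finite_of_isOpen _ hCopen
  have : (C.subgroupOf U).FiniteIndex := Subgroup.finiteIndex_of_finite_quotient
  have hCimage : U.subtype '' (C.subgroupOf U : Set U) = C := by
    rw [Subgroup.coe_subgroupOf]
    exact Set.image_preimage_eq_of_subset fun x hx => ⟨⟨x, hCU hx⟩, rfl⟩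
  have key := (C.subgroupOf U).index_mul_measure hCopen.measurableSet (μ.comap U.subtype)
  rw [hemb.comap_apply, hemb.comap_apply, hCimage, Set.image_univ, Subgroup.coe_subtype,
    Subtype.range_coe] at key
  exact key.symm

variable {G' : Type*} [Group G'] [TopologicalSpace G'] [IsTopologicalGroup G']
  [MeasurableSpace G'] [BorelSpace G']

lemma measure_map_mul_measure_eq (μ : Measure G) [μ.IsMulLeftInvariant]
    (ν : Measure G') [ν.IsMulLeftInvariant] {f : G →* G'} (hf : Continuous f)
    (hf' : IsOpenMap f) {C U : Subgroup G} (hCU : C ≤ U) (hUC : U ⊓ f.ker ≤ C)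
    (hU : IsCompact (U : Set G)) (hC : IsOpen (C : Set G)) :
    ν (C.map f) * μ U = ν (U.map f) * μ C := by
  have hfU : IsCompact (U.map f : Set G') := by rw [Subgroup.coe_map]; exact hU.image hf
  have hfC : IsOpen (C.map f : Set G') := by rw [Subgroup.coe_map]; exact hf' _ hC
  rw [measure_eq_relIndex_mul μ hCU hU hC,
    measure_eq_relIndex_mul ν (Subgroup.map_mono hCU) hfU hfC,
    Subgroup.relIndex_map_map_of_inf_ker_le f hCU hUC]
  ring

end HaarCounting

section Entropy

variable {X : Type*} [MeasurableSpace X]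

noncomputable def cotrajEntropy (μ : Measure X) (ψ : X → X) (U : Set X) : ℝ≥0∞ :=
  atTop.limsup fun n : ℕ => ENNReal.ofReal ((-Real.log (μ (cotraj ψ U n)).toReal) / n)

lemma ENNReal.ofReal_neg_log_toReal_div_le {m m' c : ℝ≥0∞} (hm' : m' ≠ 0) (hc : c ≠ ⊤)
    (h : m' ≤ c * m) (n : ℕ) :
    ENNReal.ofReal ((-Real.log m.toReal) / n) ≤
      ENNReal.ofReal ((-Real.log m'.toReal) / n) + ENNReal.ofReal (Real.log c.toReal / n) := by
  rcases eq_or_ne m.toReal 0 with hm | hm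
  · -- `m = 0` or `m = ⊤`: the left side is the junk value `ofReal 0`
    simp [hm]
  have hcm : c * m ≠ ⊤ := ENNReal.mul_ne_top hc (ENNReal.toReal_ne_zero.1 hm).2
  have h' : m'.toReal ≤ c.toReal * m.toReal := by
    rw [← ENNReal.toReal_mul]
    exact ENNReal.toReal_mono hcm h
  have hm'pos : 0 < m'.toReal := ENNReal.toReal_pos hm' (ne_top_of_le_ne_top hcm h)
  have hc0 : c.toReal ≠ 0 := by
    rintro hc0
    rw [hc0, zero_mul] at h'
    exact hm'pos.not_ge h'
  have hlog : -Real.log m.toReal ≤ -Real.log m'.toReal + Real.log c.toReal := by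
    have := Real.log_le_log hm'pos h'
    rw [Real.log_mul hc0 hm] at this
    linarith
  calc ENNReal.ofReal ((-Real.log m.toReal) / n)
      ≤ ENNReal.ofReal ((-Real.log m'.toReal + Real.log c.toReal) / n) :=
        ENNReal.ofReal_le_ofReal (div_le_div_of_nonneg_right hlog n.cast_nonneg)
    _ ≤ _ := by rw [add_div]; exact ENNReal.ofReal_add_le

lemma tendsto_ofReal_div_natCast_atTop (a : ℝ) :
    Tendsto (fun n : ℕ => ENNReal.ofReal (a / n)) atTop (𝓝 0) := by
  simpa using (ENNReal.tendsto_ofReal (tendsto_const_div_atTop_nhds_zero_nat a))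

lemma cotrajEntropy_le_of_eventually_le_mul {Y : Type*} [MeasurableSpace Y] {μ : Measure X}
    {ν : Measure Y} {ψ : X → X} {ψ' : Y → Y} {U : Set X} {V : Set Y} {c : ℝ≥0∞} (hc : c ≠ ⊤)
    (hν : ∀ᶠ n in atTop, ν (cotraj ψ' V n) ≠ 0)
    (hle : ∀ᶠ n in atTop, ν (cotraj ψ' V n) ≤ c * μ (cotraj ψ U n)) :
    cotrajEntropy μ ψ U ≤ cotrajEntropy ν ψ' V := by
  calc cotrajEntropy μ ψ U
      ≤ atTop.limsup ((fun n : ℕ => ENNReal.ofReal ((-Real.log (ν (cotraj ψ' V n)).toReal) / n))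
          + fun n : ℕ => ENNReal.ofReal (Real.log c.toReal / n)) :=
        limsup_le_limsup (by filter_upwards [hν, hle] with n h0 h using
          ENNReal.ofReal_neg_log_toReal_div_le h0 hc h n)
    _ = cotrajEntropy ν ψ' V :=
        ENNReal.limsup_add_of_right_tendsto_zero (tendsto_ofReal_div_natCast_atTop _) _

lemma cotrajEntropy_const (μ : Measure X) {x₀ : X} {U : Set X} (hx₀ : x₀ ∈ U) :
    cotrajEntropy μ (fun _ => x₀) U = 0 := by
  refine ((tendsto_ofReal_div_natCast_atTop (-Real.log (μ U).toReal)).congr' ?_).limsup_eq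
  filter_upwards [eventually_ne_atTop 0] with n hn
  rw [cotraj_const_of_ne_zero hx₀ hn]

end Entropy

section Htop

variable {H : Type*} [Group H] [TopologicalSpace H] [IsTopologicalGroup H] [T2Space H]
  [LocallyCompactSpace H]

lemma mulHtop_eq_iSup_cotrajEntropy [MeasurableSpace H] [BorelSpace H] (ψ : H → H) :
    mulHtop ψ = ⨆ U ∈ {U : Set H | IsCompact U ∧ U ∈ 𝓝 (1 : H)},
      cotrajEntropy Measure.haar ψ U := by
  obtain rfl := BorelSpace.measurable_eq (α := H)
  rw [mulHtop, dif_pos ⟨‹_›, ‹_›, ‹_›⟩]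
  rfl

lemma mulHtop_const_one : mulHtop (fun _ : H => (1 : H)) = 0 := by
  borelize H
  rw [mulHtop_eq_iSup_cotrajEntropy]
  exact le_antisymm (iSup₂_le fun U hU => (cotrajEntropy_const _ (mem_of_mem_nhds hU.2)).le)
    bot_le

lemma mulHtop_eq_iSup_of_hasBasis [MeasurableSpace H] [BorelSpace H] {ψ : H →* H}
    (hψ : Continuous ψ) {ι : Type*} {p : ι → Prop} {s : ι → Set H}
    (hs : (𝓝 (1 : H)).HasBasis p s) (hcpt : ∀ i, p i → IsCompact (s i)) :
    mulHtop ψ = ⨆ (i) (_ : p i), cotrajEntropy Measure.haar ψ (s i) := by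
  rw [mulHtop_eq_iSup_cotrajEntropy]
  refine le_antisymm (iSup₂_le fun V hV => ?_)
    (iSup₂_le fun i hi => le_iSup₂_of_le (s i) ⟨hcpt i hi, hs.mem_of_mem hi⟩ le_rfl)
  obtain ⟨i, hi, hsV⟩ := hs.mem_iff.1 hV.2
  refine le_iSup₂_of_le i hi (cotrajEntropy_le_of_eventually_le_mul (c := 1) ENNReal.one_ne_top
    (.of_forall fun n => ?_) (.of_forall fun n => ?_))
  · exact (Measure.measure_pos_of_mem_nhds _
      (cotraj_mem_nhds hψ (map_one ψ) (hs.mem_of_mem hi) n)).ne'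
  · rw [one_mul]
    exact measure_mono (cotraj_mono _ hsV n)

end Htop

section Factor

variable {G G' : Type*} [Group G] [TopologicalSpace G] [IsTopologicalGroup G]
  [MeasurableSpace G] [BorelSpace G] [Group G'] [TopologicalSpace G'] [IsTopologicalGroup G']
  [MeasurableSpace G'] [BorelSpace G'] {μ : Measure G} {ν : Measure G'} {f : G →* G'}
  {φ : G →* G} {φ' : G' →* G'} {U : Subgroup G}

lemma measure_map_cotrajSubgroup_mul [μ.IsMulLeftInvariant] [ν.IsMulLeftInvariant]
    (hf : Continuous f) (hf' : IsOpenMap f) (hker : f.ker ≤ φ.ker) (hφ : Continuous φ)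
    (hUc : IsCompact (U : Set G)) (hUo : IsOpen (U : Set G)) {n : ℕ} (hn : n ≠ 0) :
    ν (f '' cotraj φ U n) * μ U = ν (f '' U) * μ (cotraj φ U n) := by
  have hC : IsOpen (cotrajSubgroup φ U n : Set G) :=
    Subgroup.isOpen_of_mem_nhds _ (cotraj_mem_nhds hφ (map_one φ) (hUo.mem_nhds U.one_mem) n)
  simpa using measure_map_mul_measure_eq μ ν hf hf'
    (C := cotrajSubgroup φ U n) (cotraj_subset_of_ne_zero _ _ hn)
    ((inf_le_inf_left U hker).trans (inf_ker_le_cotrajSubgroup φ U n)) hUc hC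

variable [μ.IsHaarMeasure] [ν.IsHaarMeasure]

lemma cotrajEntropy_image_le (hf : Continuous f) (hf' : IsOpenMap f)
    (hsemi : Function.Semiconj f φ φ') (hker : f.ker ≤ φ.ker) (hφ : Continuous φ)
    (hUc : IsCompact (U : Set G)) (hUo : IsOpen (U : Set G)) :
    cotrajEntropy ν φ' (f '' U) ≤ cotrajEntropy μ φ U := by
  have hνU : ν (f '' U) ≠ 0 := (hf' _ hUo).measure_ne_zero ν ⟨1, ⟨1, U.one_mem, map_one f⟩⟩
  refine cotrajEntropy_le_of_eventually_le_mul (c := μ U / ν (f '' U))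
    (ENNReal.div_ne_top hUc.measure_ne_top hνU)
    (.of_forall fun n => (Measure.measure_pos_of_mem_nhds _
      (cotraj_mem_nhds hφ (map_one φ) (hUo.mem_nhds U.one_mem) n)).ne') ?_
  filter_upwards [eventually_ne_atTop 0] with n hn
  have hratio := measure_map_cotrajSubgroup_mul (μ := μ) (ν := ν) hf hf' hker hφ hUc hUo hn
  calc μ (cotraj φ U n) = ν (f '' cotraj φ U n) * μ U / ν (f '' U) :=
        (ENNReal.eq_div_iff hνU (hUc.image hf).measure_ne_top).2 hratio.symm
    _ ≤ ν (cotraj φ' (f '' U) n) * μ U / ν (f '' U) := by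
        gcongr
        exact hsemi.image_cotraj_subset U n
    _ = μ U / ν (f '' U) * ν (cotraj φ' (f '' U) n) := by
        rw [mul_div_assoc, mul_comm]

lemma cotrajEntropy_le_image (hf : Continuous f) (hf' : IsOpenMap f)
    (hsemi : Function.Semiconj f φ φ') (hker : f.ker ≤ φ.ker) (hφ : Continuous φ)
    (hφ' : Continuous φ') (hUc : IsCompact (U : Set G)) (hUo : IsOpen (U : Set G))
    {U' : Subgroup G} (hU'o : IsOpen (U' : Set G)) (hU'U : U' ≤ U ⊓ U.comap φ) :
    cotrajEntropy μ φ U ≤ cotrajEntropy ν φ' (f '' U') := by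
  have hμU : μ U ≠ 0 := hUo.measure_ne_zero μ ⟨1, U.one_mem⟩
  refine cotrajEntropy_le_of_eventually_le_mul (c := ν (f '' U) / μ U)
    (ENNReal.div_ne_top (hUc.image hf).measure_ne_top hμU)
    (.of_forall fun n => (Measure.measure_pos_of_mem_nhds _ (cotraj_mem_nhds hφ' (map_one φ')
      ((hf' _ hU'o).mem_nhds ⟨1, U'.one_mem, map_one f⟩) n)).ne') ?_
  filter_upwards [eventually_ne_atTop 0] with n hn
  have hratio := measure_map_cotrajSubgroup_mul (μ := μ) (ν := ν) hf hf' hker hφ hUc hUo hn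
  calc ν (cotraj φ' (f '' U') n) ≤ ν (f '' cotraj φ U n) :=
        measure_mono (cotraj_image_subset_image_cotraj hsemi hker (fun _ hx => (hU'U hx).1)
          (fun _ hx => (hU'U hx).2) hn)
    _ = ν (f '' U) * μ (cotraj φ U n) / μ U :=
        (ENNReal.eq_div_iff hμU hUc.measure_ne_top).2 (by rw [mul_comm, hratio])
    _ = ν (f '' U) / μ U * μ (cotraj φ U n) := by
        rw [div_eq_mul_inv, div_eq_mul_inv]; ring

end Factor

lemma mulQuotHom_mk {G : Type*} [Group G] {φ : G →* G} {N : Subgroup G} [N.Normal]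
    (hN : N ≤ N.comap φ) (x : G) : mulQuotHom φ N x = φ x := by
  rw [mulQuotHom, dif_pos hN]
  rfl

lemma mulSubHom_ker_apply {G : Type*} [Group G] (φ : G →* G) (x : φ.ker) :
    mulSubHom φ φ.ker x = 1 := by
  have hker : φ.ker ≤ φ.ker.comap φ := fun x hx => by simp [MonoidHom.mem_ker.1 hx]
  rw [mulSubHom, dif_pos hker]
  exact Subtype.ext x.2

theorem mulHtop_eq_mulHtop_mulQuotHom {G : Type*} [Group G] [TopologicalSpace G]
    [IsTopologicalGroup G] [T2Space G] [LocallyCompactSpace G] (N : Subgroup G) [N.Normal]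
    [IsClosed (N : Set G)] {φ : G →* G} (hφ : Continuous φ) (hN : N ≤ φ.ker)
    {ℬ : Set (Subgroup G)}
    (hbase : (𝓝 (1 : G)).HasBasis (fun U : Subgroup G => U ∈ ℬ) (fun U => (U : Set G)))
    (hcpt : ∀ U ∈ ℬ, IsCompact (U : Set G)) (hop : ∀ U ∈ ℬ, IsOpen (U : Set G)) :
    mulHtop φ = mulHtop (mulQuotHom φ N) := by
  borelize G (G ⧸ N)
  set π := QuotientGroup.mk' N
  have hNφ : N ≤ N.comap φ := fun x hx => by simp [MonoidHom.mem_ker.1 (hN hx)]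
  have hsemi : Function.Semiconj π φ (mulQuotHom φ N) := fun x => (mulQuotHom_mk hNφ x).symm
  have hker : π.ker ≤ φ.ker := by rwa [QuotientGroup.ker_mk']
  have hπ : Continuous π := QuotientGroup.continuous_mk
  have hπ' : IsOpenMap π := QuotientGroup.isOpenMap_coe
  have hφ' : Continuous (mulQuotHom φ N) :=
    (QuotientGroup.isQuotientMap_mk N).continuous_iff.2 (hsemi.comp_eq ▸ hπ.comp hφ)
  have hbase' : (𝓝 (1 : G ⧸ N)).HasBasis (· ∈ ℬ) (fun U => π '' U) := by
    rw [← QuotientGroup.mk_one, QuotientGroup.nhds_eq]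
    exact hbase.map π
  rw [mulHtop_eq_iSup_of_hasBasis hφ hbase hcpt,
    mulHtop_eq_iSup_of_hasBasis hφ' hbase' fun U hU => (hcpt U hU).image hπ]
  refine le_antisymm (iSup₂_le fun U hU => ?_) (iSup₂_le fun U hU => le_iSup₂_of_le U hU
    (cotrajEntropy_image_le hπ hπ' hsemi hker hφ (hcpt U hU) (hop U hU)))
  have hUφU : ((U ⊓ U.comap φ : Subgroup G) : Set G) ∈ 𝓝 (1 : G) := by
    rw [Subgroup.coe_inf, Subgroup.coe_comap]
    exact inter_mem ((hop U hU).mem_nhds U.one_mem) (hφ.continuousAt.preimage_mem_nhds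
      (by rw [map_one]; exact (hop U hU).mem_nhds U.one_mem))
  obtain ⟨U', hU', hU'U⟩ := hbase.mem_iff.1 hUφU
  exact le_iSup₂_of_le U' hU' (cotrajEntropy_le_image hπ hπ' hsemi hker hφ hφ' (hcpt U hU)
    (hop U hU) (hop U' hU') hU'U)

theorem entropy_eq_of_kernel_quotient_general
    (G : Type*) [Group G] [TopologicalSpace G] [IsTopologicalGroup G]
    [T2Space G] [LocallyCompactSpace G]
    (φ : G →* G) (hφ : Continuous φ)
    (ℬ : Set (Subgroup G))
    (hbase : (𝓝 (1 : G)).HasBasis (fun U : Subgroup G => U ∈ ℬ) (fun U => (U : Set G)))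
    (hcpt : ∀ U ∈ ℬ, IsCompact (U : Set G))
    (hop : ∀ U ∈ ℬ, IsOpen (U : Set G)) :
    mulHtop ⇑(mulSubHom φ φ.ker) = 0 ∧ mulHtop ⇑φ = mulHtop ⇑(mulQuotHom φ φ.ker) := by
  have hker : IsClosed (φ.ker : Set G) := isClosed_singleton.preimage hφ
  have : LocallyCompactSpace φ.ker := hker.locallyCompactSpace
  refine ⟨?_, mulHtop_eq_mulHtop_mulQuotHom φ.ker hφ le_rfl hbase hcpt hop⟩
  rw [funext (mulSubHom_ker_apply φ)]
  exact mulHtop_const_one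

/-- Let `G` be a totally disconnected locally compact group and `φ` a
continuous endomorphism of `G`. If there is a local base at the identity consisting of
compact open subgroups `U` all of whose iterated preimages `φ⁻ⁿ(U)` (`n ≥ 1`) are normal
in `G`, then `h_top(φ|_{ker φ}) = 0` and `h_top(φ) = h_top(φ̄)`, where `φ̄` is induced on
`G/ker φ`. -/
theorem entropy_eq_of_kernel_quotient
    (G : Type*) [Group G] [TopologicalSpace G] [IsTopologicalGroup G]
    [T2Space G] [LocallyCompactSpace G] [TotallyDisconnectedSpace G]
    (φ : G →* G) (hφ : Continuous φ)
    (ℬ : Set (Subgroup G))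
    (hbase : (𝓝 (1 : G)).HasBasis (fun U : Subgroup G => U ∈ ℬ) (fun U => (U : Set G)))
    (hcpt : ∀ U ∈ ℬ, IsCompact (U : Set G))
    (hop : ∀ U ∈ ℬ, IsOpen (U : Set G))
    (hnorm : ∀ U ∈ ℬ, ∀ n : ℕ, 1 ≤ n →
      ((fun V : Subgroup G => V.comap φ)^[n] U).Normal) :
    mulHtop ⇑(mulSubHom φ φ.ker) = 0 ∧ mulHtop ⇑φ = mulHtop ⇑(mulQuotHom φ φ.ker) :=
  entropy_eq_of_kernel_quotient_general G φ hφ ℬ hbase hcpt hop
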